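/- arXiv:1905.04645 — 2 statements merged into one kernel-verified Lean document; each statement's English description precedes it below -/
import Mathlib

section
/- Let E1, E2 ∈ (M, c_k, n_k) be Moran sets, with E1 = ⋂_{k≥1} E_k^{(1)} and E2 = ⋂_{k≥1} E_k^{(2)}, where E_k^{(i)} is the union of the rank-k basic intervals of E_i. Let F : ℝ² → ℝ be continuous. Fix k_0 ≥ 1 and let A (resp. B) be the left (resp. right) endpoint of some rank-k_0 basic interval of E1 with A < B, and let C (resp. D) be the left (resp. right) endpoint of some rank-k_0 basic interval of E2 with C < D. For n ≥ k_0 and i ∈ {1,2}, let G_n^{(i)} be the union of all rank-n basic intervals of E_i that are contained in [A,B] (for i = 1) or in [C,D] (for i = 2). Then: (a) E1 ∩ [A,B] = ⋂_{n≥k_0} G_n^{(1)} and E2 ∩ [C,D] = ⋂_{n≥k_0} G_n^{(2)}; and (b) if for every n ≥ k_0 and all rank-n basic intervals I1 ⊆ G_n^{(1)} and I2 ⊆ G_n^{(2)} one has F(I1 × I2) = F(Ĩ1 × Ĩ2), then F( (E1 ∩ [A,B]) × (E2 ∩ [C,D]) ) = F( G_{k_0}^{(1)} × G_{k_0}^{(2)}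 ). -/
open Set

/-- A word of rank `k`: the `j`-th letter is an element of `Fin (nseq j)`
(so there are `nseq j` choices for the letter at position `j`). -/
def MoranWord (nseq : ℕ → ℕ) (k : ℕ) : Type := ∀ j : Fin k, Fin (nseq j)

/-- A Moran structure on `[0,1]` with branching numbers `nseq` and contraction
ratios `cseq` (the index `k : ℕ` here corresponds to the index `k + 1` in the paper):
a family of nondegenerate closed intervals `T k σ ⊆ [0,1]`, indexed by words, such
that the `nseq k` children of a rank-`k` interval are subintervals with pairwise
disjoint interiors, each of relative length `cseq k`, whose union has the same
convex hull as the parent. -/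
structure MoranStructure (nseq : ℕ → ℕ) (cseq : ℕ → ℝ) where
  T : (k : ℕ) → MoranWord nseq k → Set ℝ
  root : T 0 (fun j => j.elim0) = Icc (0 : ℝ) 1
  isClosedInterval : ∀ (k : ℕ) (σ : MoranWord nseq k), ∃ x y : ℝ, x < y ∧ T k σ = Icc x y
  child_subset : ∀ (k : ℕ) (σ : MoranWord nseq k) (i : Fin (nseq k)),
    T (k + 1) (Fin.snoc σ i) ⊆ T k σ
  disjoint_interiors : ∀ (k : ℕ) (σ : MoranWord nseq k) (i i' : Fin (nseq k)), i ≠ i' →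
    interior (T (k + 1) (Fin.snoc σ i)) ∩ interior (T (k + 1) (Fin.snoc σ i')) = ∅
  ratio : ∀ (k : ℕ) (σ : MoranWord nseq k) (i : Fin (nseq k)),
    Metric.diam (T (k + 1) (Fin.snoc σ i)) = cseq k * Metric.diam (T k σ)
  hull : ∀ (k : ℕ) (σ : MoranWord nseq k),
    convexHull ℝ (⋃ i : Fin (nseq k), T (k + 1) (Fin.snoc σ i)) = T k σ

/-- The union `E_k` of all basic intervals of rank `k`. -/
def MoranStructure.level {nseq : ℕ → ℕ} {cseq : ℕ → ℝ}
    (M : MoranStructure nseq cseq) (k : ℕ) : Set ℝ :=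
  ⋃ σ : MoranWord nseq k, M.T k σ

/-- The Moran set `E = ⋂_{k ≥ 1} ⋃_{σ ∈ D_k} T_σ` associated with a Moran structure. -/
def MoranStructure.moranSet {nseq : ℕ → ℕ} {cseq : ℕ → ℝ}
    (M : MoranStructure nseq cseq) : Set ℝ :=
  ⋂ k : ℕ, M.level (k + 1)

/-- `Ĩ` for the rank-`k` basic interval `I = T k σ`: the union of its rank-`(k+1)` children. -/
def MoranStructure.tilde {nseq : ℕ → ℕ} {cseq : ℕ → ℝ}
    (M : MoranStructure nseq cseq) (k : ℕ) (σ : MoranWord nseq k) : Set ℝ :=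
  ⋃ i : Fin (nseq k), M.T (k + 1) (Fin.snoc σ i)

/-- `G_n`: the union of all rank-`n` basic intervals of `M` contained in `[A, B]`. -/
def MoranStructure.G {nseq : ℕ → ℕ} {cseq : ℕ → ℝ}
    (M : MoranStructure nseq cseq) (A B : ℝ) (n : ℕ) : Set ℝ :=
  ⋃ σ : MoranWord nseq n, ⋃ (_ : M.T n σ ⊆ Icc A B), M.T n σ


/-!
Basic intervals of one rank are nondegenerate closed intervals with pairwise disjoint interiors,
so of any two, one lies to the left of the other. Consequently a rank-`k₀` basic interval meeting
`(A, B)` lies in `[A, B]`, and so do all its descendants; the endpoints `A` and `B`, being extreme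
points of their intervals and hence of the convex hull of the children, persist in descendants of
the intervals they bound, which also lie in `[A, B]`. This gives `G_n = [A, B] ∩ E_n` for
`n ≥ k₀`, whence (a), and shows that the `G_n` decrease.

For (b), the hypothesis says `F(G_n¹ × G_n²) ⊆ F(G_{n+1}¹ × G_{n+1}²)`, so every value of `F` on
`G_{k₀}¹ × G_{k₀}²` is attained on each of the decreasing compact sets `G_n¹ × G_n²`. Cantor's
intersection theorem, applied to the traces of the fibre of `F`, shows it is attained on their
intersection, which is `(E₁ ∩ [A, B]) × (E₂ ∩ [C, D])` by (a).
-/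

lemma forall_le_or_forall_ge_of_disjoint_interior {s t : Set ℝ}
    (hs : ∃ a b, a < b ∧ s = Icc a b) (ht : ∃ a b, a < b ∧ t = Icc a b)
    (hst : interior s ∩ interior t = ∅) :
    (∀ x ∈ s, ∀ y ∈ t, x ≤ y) ∨ (∀ y ∈ t, ∀ x ∈ s, y ≤ x) := by
  obtain ⟨a, b, hab, rfl⟩ := hs
  obtain ⟨a', b', hab', rfl⟩ := ht
  rw [interior_Icc, interior_Icc, ← disjoint_iff_inter_eq_empty, Ioo_disjoint_Ioo, min_le_iff,
    le_max_iff, le_max_iff] at hst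
  rcases hst with (h | h) | (h | h)
  · linarith
  · exact .inl fun x hx y hy => by linarith [hx.2, hy.1]
  · exact .inr fun y hy x hx => by linarith [hx.1, hy.2]
  · linarith

theorem mem_image_iInter_of_antitone {X Y : Type*} [TopologicalSpace X] [TopologicalSpace Y]
    [T1Space Y] {f : X → Y} (hf : Continuous f) {K : ℕ → Set X} (hK : ∀ n, K (n + 1) ⊆ K n)
    (hK₀ : IsCompact (K 0)) (hKc : ∀ n, IsClosed (K n)) {y : Y} (hy : ∀ n, y ∈ f '' K n) :
    y ∈ f '' ⋂ n, K n := by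
  have hfiber : IsClosed (f ⁻¹' {y}) := isClosed_singleton.preimage hf
  obtain ⟨x, hx⟩ := IsCompact.nonempty_iInter_of_sequence_nonempty_isCompact_isClosed
    (fun n => K n ∩ f ⁻¹' {y}) (fun n => inter_subset_inter_left _ (hK n))
    (fun n => by obtain ⟨x, hx, rfl⟩ := hy n; exact ⟨x, hx, rfl⟩)
    (hK₀.inter_right hfiber) (fun n => (hKc n).inter hfiber)
  rw [mem_iInter] at hx
  exact ⟨x, mem_iInter.2 fun n => (hx n).1, (hx 0).2⟩

instance MoranWord.instFinite (nseq : ℕ → ℕ) (n : ℕ) : Finite (MoranWord nseq n) :=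
  Pi.finite

lemma MoranWord.snoc_init_self {nseq : ℕ → ℕ} {k : ℕ} (σ : MoranWord nseq (k + 1)) :
    (Fin.snoc (Fin.init σ) (σ (Fin.last k)) : MoranWord nseq (k + 1)) = σ :=
  Fin.snoc_init_self σ

namespace MoranStructure

variable {nseq : ℕ → ℕ} {cseq : ℕ → ℝ} (M : MoranStructure nseq cseq)

lemma T_subset_T_init {k : ℕ} (σ : MoranWord nseq (k + 1)) :
    M.T (k + 1) σ ⊆ M.T k (Fin.init σ) := by
  have h := M.child_subset k (Fin.init σ) (σ (Fin.last k))
  rwa [MoranWord.snoc_init_self] at h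

lemma exists_T_subset_T_of_le {k n : ℕ} (hkn : k ≤ n) (σ : MoranWord nseq n) :
    ∃ ρ : MoranWord nseq k, M.T n σ ⊆ M.T k ρ := by
  induction n, hkn using Nat.le_induction with
  | base => exact ⟨σ, subset_rfl⟩
  | succ _ _ ih =>
    obtain ⟨ρ, hρ⟩ := ih (Fin.init σ)
    exact ⟨ρ, (M.T_subset_T_init σ).trans hρ⟩

lemma level_antitone : Antitone M.level :=
  antitone_nat_of_succ_le fun _ => iUnion_subset fun σ =>
    (M.T_subset_T_init σ).trans (subset_iUnion _ _)

lemma moranSet_subset_level (n : ℕ) : M.moranSet ⊆ M.level n :=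
  (iInter_subset _ n).trans (M.level_antitone n.le_succ)

lemma isClosed_level (n : ℕ) : IsClosed (M.level n) :=
  isClosed_iUnion_of_finite fun σ => by
    obtain ⟨x, y, -, h⟩ := M.isClosedInterval n σ
    exact h ▸ isClosed_Icc

lemma interior_T_inter_interior_T {k : ℕ} {σ τ : MoranWord nseq k} (hστ : σ ≠ τ) :
    interior (M.T k σ) ∩ interior (M.T k τ) = ∅ := by
  induction k with
  | zero => exact absurd (funext fun j => j.elim0) hστ
  | succ k ih =>
    by_cases hinit : Fin.init σ = Fin.init τ
    · have hlast : σ (Fin.last k) ≠ τ (Fin.last k) := fun h =>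
        hστ (by rw [← MoranWord.snoc_init_self σ, ← MoranWord.snoc_init_self τ, hinit, h])
      have h := M.disjoint_interiors k (Fin.init σ) _ _ hlast
      rwa [MoranWord.snoc_init_self, hinit, MoranWord.snoc_init_self] at h
    · exact subset_empty_iff.1 <| (ih hinit).symm ▸ inter_subset_inter
        (interior_mono (M.T_subset_T_init σ)) (interior_mono (M.T_subset_T_init τ))

lemma forall_le_or_forall_ge_of_ne {k : ℕ} {σ τ : MoranWord nseq k} (hστ : σ ≠ τ) :
    (∀ x ∈ M.T k σ, ∀ y ∈ M.T k τ, x ≤ y) ∨ (∀ y ∈ M.T k τ, ∀ x ∈ M.T k σ, y ≤ x) :=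
  forall_le_or_forall_ge_of_disjoint_interior (M.isClosedInterval k σ)
    (M.isClosedInterval k τ) (M.interior_T_inter_interior_T hστ)

variable {k : ℕ} {σ ρ : MoranWord nseq k} {A B x : ℝ}

lemma mem_lowerBounds_of_isLeast (hA : IsLeast (M.T k σ) A) (hx : x ∈ M.T k ρ) (hAx : A < x) :
    A ∈ lowerBounds (M.T k ρ) := by
  obtain rfl | hρσ := eq_or_ne ρ σ
  · exact hA.2
  rcases M.forall_le_or_forall_ge_of_ne hρσ with h | h
  · exact absurd (h x hx A hA.1) hAx.not_ge
  · exact fun y hy => h A hA.1 y hy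

lemma mem_upperBounds_of_isGreatest (hB : IsGreatest (M.T k σ) B) (hx : x ∈ M.T k ρ)
    (hxB : x < B) : B ∈ upperBounds (M.T k ρ) := by
  obtain rfl | hρσ := eq_or_ne ρ σ
  · exact hB.2
  rcases M.forall_le_or_forall_ge_of_ne hρσ with h | h
  · exact fun y hy => h y hy B hB.1
  · exact absurd (h B hB.1 x hx) hxB.not_ge

lemma mem_extremePoints_of_isLeast (hA : IsLeast (M.T k σ) A) :
    A ∈ (M.T k σ).extremePoints ℝ := by
  obtain ⟨a, b, hab, h⟩ := M.isClosedInterval k σ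
  rw [h] at hA ⊢
  rw [extremePoints_Icc hab.le, hA.unique (isLeast_Icc hab.le)]
  exact mem_insert a {b}

lemma mem_extremePoints_of_isGreatest (hB : IsGreatest (M.T k σ) B) :
    B ∈ (M.T k σ).extremePoints ℝ := by
  obtain ⟨a, b, hab, h⟩ := M.isClosedInterval k σ
  rw [h] at hB ⊢
  rw [extremePoints_Icc hab.le, hB.unique (isGreatest_Icc hab.le)]
  exact mem_insert_of_mem a rfl

lemma extremePoints_T_subset_tilde : (M.T k σ).extremePoints ℝ ⊆ M.tilde k σ := by
  rw [← M.hull k σ]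
  exact extremePoints_convexHull_subset

lemma exists_mem_T_subset_T_of_mem_extremePoints {n : ℕ} (hkn : k ≤ n)
    (hx : x ∈ (M.T k σ).extremePoints ℝ) :
    ∃ τ : MoranWord nseq n, x ∈ M.T n τ ∧ M.T n τ ⊆ M.T k σ := by
  suffices ∃ τ : MoranWord nseq n, x ∈ (M.T n τ).extremePoints ℝ ∧ M.T n τ ⊆ M.T k σ from
    let ⟨τ, hxτ, hτσ⟩ := this; ⟨τ, hxτ.1, hτσ⟩
  induction n, hkn using Nat.le_induction with
  | base => exact ⟨σ, hx, subset_rfl⟩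
  | succ n _ ih =>
    obtain ⟨τ, hxτ, hτσ⟩ := ih
    obtain ⟨i, hi⟩ := mem_iUnion.1 (M.extremePoints_T_subset_tilde hxτ)
    have hchild := M.child_subset n τ i
    exact ⟨Fin.snoc τ i, inter_extremePoints_subset_extremePoints_of_subset hchild ⟨hi, hxτ⟩,
      hchild.trans hτσ⟩

lemma mem_G {n : ℕ} :
    x ∈ M.G A B n ↔ ∃ σ : MoranWord nseq n, M.T n σ ⊆ Icc A B ∧ x ∈ M.T n σ := by
  simp only [G, mem_iUnion, exists_prop]

lemma G_subset_Icc_inter_level (n : ℕ) : M.G A B n ⊆ Icc A B ∩ M.level n := fun _ hx =>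
  let ⟨σ, hσ, hxσ⟩ := M.mem_G.1 hx
  ⟨hσ hxσ, mem_iUnion.2 ⟨σ, hxσ⟩⟩

lemma tilde_subset_G {n : ℕ} {σ : MoranWord nseq n} (hσ : M.T n σ ⊆ Icc A B) :
    M.tilde n σ ⊆ M.G A B (n + 1) :=
  iUnion_subset fun i _ hx => M.mem_G.2 ⟨_, (M.child_subset n σ i).trans hσ, hx⟩

variable {σA σB : MoranWord nseq k}

lemma G_eq_Icc_inter_level (hAB : A < B) (hA : IsLeast (M.T k σA) A)
    (hB : IsGreatest (M.T k σB) B) {n : ℕ} (hkn : k ≤ n) :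
    M.G A B n = Icc A B ∩ M.level n := by
  refine (M.G_subset_Icc_inter_level n).antisymm fun x ⟨hxAB, hx⟩ => ?_
  have hσA : M.T k σA ⊆ Icc A B := fun y hy =>
    ⟨hA.2 hy, M.mem_upperBounds_of_isGreatest hB hA.1 hAB hy⟩
  have hσB : M.T k σB ⊆ Icc A B := fun y hy =>
    ⟨M.mem_lowerBounds_of_isLeast hA hB.1 hAB hy, hB.2 hy⟩
  rcases hxAB.1.eq_or_lt with rfl | hAx
  · obtain ⟨τ, hxτ, hτ⟩ :=
      M.exists_mem_T_subset_T_of_mem_extremePoints hkn (M.mem_extremePoints_of_isLeast hA)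
    exact M.mem_G.2 ⟨τ, hτ.trans hσA, hxτ⟩
  rcases hxAB.2.eq_or_lt with rfl | hxB
  · obtain ⟨τ, hxτ, hτ⟩ :=
      M.exists_mem_T_subset_T_of_mem_extremePoints hkn (M.mem_extremePoints_of_isGreatest hB)
    exact M.mem_G.2 ⟨τ, hτ.trans hσB, hxτ⟩
  obtain ⟨σ, hxσ⟩ := mem_iUnion.1 hx
  obtain ⟨ρ, hσρ⟩ := M.exists_T_subset_T_of_le hkn σ
  exact M.mem_G.2 ⟨σ, fun y hy =>
    ⟨M.mem_lowerBounds_of_isLeast hA (hσρ hxσ) hAx (hσρ hy),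
      M.mem_upperBounds_of_isGreatest hB (hσρ hxσ) hxB (hσρ hy)⟩, hxσ⟩

lemma iInter_G_eq (hAB : A < B) (hA : IsLeast (M.T k σA) A)
    (hB : IsGreatest (M.T k σB) B) :
    ⋂ n, ⋂ (_ : k ≤ n), M.G A B n = M.moranSet ∩ Icc A B := by
  refine Subset.antisymm (fun x hx => ?_) fun x hx => ?_
  · rw [mem_iInter₂] at hx
    refine ⟨mem_iInter.2 fun j => ?_, (M.G_subset_Icc_inter_level k (hx k le_rfl)).1⟩
    exact M.level_antitone (le_max_left (j + 1) k)
      (M.G_subset_Icc_inter_level _ (hx _ (le_max_right _ _))).2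
  · exact mem_iInter₂.2 fun n hkn => (M.G_eq_Icc_inter_level hAB hA hB hkn).symm ▸
      ⟨hx.2, M.moranSet_subset_level n hx.1⟩

lemma G_succ_subset (hAB : A < B) (hA : IsLeast (M.T k σA) A)
    (hB : IsGreatest (M.T k σB) B) {n : ℕ} (hkn : k ≤ n) :
    M.G A B (n + 1) ⊆ M.G A B n := by
  rw [M.G_eq_Icc_inter_level hAB hA hB hkn,
    M.G_eq_Icc_inter_level hAB hA hB (hkn.trans n.le_succ)]
  exact inter_subset_inter_right _ (M.level_antitone n.le_succ)

lemma isCompact_G (hAB : A < B) (hA : IsLeast (M.T k σA) A)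
    (hB : IsGreatest (M.T k σB) B) {n : ℕ} (hkn : k ≤ n) :
    IsCompact (M.G A B n) :=
  M.G_eq_Icc_inter_level hAB hA hB hkn ▸ isCompact_Icc.inter_right (M.isClosed_level n)

section Image

variable (M1 M2 : MoranStructure nseq cseq) {F : ℝ × ℝ → ℝ} {C D : ℝ}

lemma image_G_prod_G_subset_succ {n : ℕ}
    (H : ∀ σ τ : MoranWord nseq n, M1.T n σ ⊆ Icc A B → M2.T n τ ⊆ Icc C D →
      F '' (M1.T n σ ×ˢ M2.T n τ) = F '' (M1.tilde n σ ×ˢ M2.tilde n τ)) :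
    F '' (M1.G A B n ×ˢ M2.G C D n) ⊆ F '' (M1.G A B (n + 1) ×ˢ M2.G C D (n + 1)) := by
  rintro _ ⟨⟨x, y⟩, ⟨hx, hy⟩, rfl⟩
  obtain ⟨σ, hσ, hxσ⟩ := M1.mem_G.1 hx
  obtain ⟨τ, hτ, hyτ⟩ := M2.mem_G.1 hy
  have hxy : F (x, y) ∈ F '' (M1.tilde n σ ×ˢ M2.tilde n τ) :=
    H σ τ hσ hτ ▸ mem_image_of_mem F ⟨hxσ, hyτ⟩
  exact image_mono (prod_mono (M1.tilde_subset_G hσ) (M2.tilde_subset_G hτ)) hxy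

lemma image_G_prod_G_subset_image_moranSet_prod (hF : Continuous F)
    {σA σB σC σD : MoranWord nseq k} (hAB : A < B) (hCD : C < D)
    (hA : IsLeast (M1.T k σA) A) (hB : IsGreatest (M1.T k σB) B)
    (hC : IsLeast (M2.T k σC) C) (hD : IsGreatest (M2.T k σD) D)
    (H : ∀ n, k ≤ n → ∀ σ τ : MoranWord nseq n, M1.T n σ ⊆ Icc A B → M2.T n τ ⊆ Icc C D →
      F '' (M1.T n σ ×ˢ M2.T n τ) = F '' (M1.tilde n σ ×ˢ M2.tilde n τ)) :
    F '' (M1.G A B k ×ˢ M2.G C D k) ⊆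
      F '' ((M1.moranSet ∩ Icc A B) ×ˢ (M2.moranSet ∩ Icc C D)) := by
  set K : ℕ → Set (ℝ × ℝ) := fun m => M1.G A B (m + k) ×ˢ M2.G C D (m + k)
  have hK : ∀ m, K (m + 1) ⊆ K m := fun m => by
    simp only [K, add_right_comm m 1 k]
    exact prod_mono (M1.G_succ_subset hAB hA hB le_add_self)
      (M2.G_succ_subset hCD hC hD le_add_self)
  have hK₀ : IsCompact (K 0) :=
    (M1.isCompact_G hAB hA hB le_add_self).prod (M2.isCompact_G hCD hC hD le_add_self)
  have hKc : ∀ m, IsClosed (K m) := fun m =>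
    (M1.isCompact_G hAB hA hB le_add_self).isClosed.prod
      (M2.isCompact_G hCD hC hD le_add_self).isClosed
  have hKE : ⋂ m, K m ⊆ (M1.moranSet ∩ Icc A B) ×ˢ (M2.moranSet ∩ Icc C D) := by
    rw [← M1.iInter_G_eq hAB hA hB, ← M2.iInter_G_eq hCD hC hD, iInter_ge_eq_iInter_nat_add,
      iInter_ge_eq_iInter_nat_add]
    exact fun p hp => ⟨mem_iInter.2 fun m => (mem_iInter.1 hp m).1,
      mem_iInter.2 fun m => (mem_iInter.1 hp m).2⟩
  intro z hz
  have hzK : ∀ m, z ∈ F '' K m := fun m => by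
    induction m with
    | zero => simpa only [K, zero_add] using hz
    | succ m ih =>
      simp only [K, add_right_comm m 1 k]
      exact M1.image_G_prod_G_subset_succ M2 (H _ le_add_self) ih
  exact image_mono hKE (mem_image_iInter_of_antitone hF hK hK₀ hKc hzK)

end Image

end MoranStructure

theorem moran_intersection_G_and_image_general
    (nseq : ℕ → ℕ) (cseq : ℕ → ℝ)
    (M1 M2 : MoranStructure nseq cseq)
    (F : ℝ × ℝ → ℝ) (hF : Continuous F)
    (k0 : ℕ)
    (A B C D : ℝ) (hAB : A < B) (hCD : C < D)
    (σA : MoranWord nseq k0) (hA : IsLeast (M1.T k0 σA) A)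
    (σB : MoranWord nseq k0) (hB : IsGreatest (M1.T k0 σB) B)
    (σC : MoranWord nseq k0) (hC : IsLeast (M2.T k0 σC) C)
    (σD : MoranWord nseq k0) (hD : IsGreatest (M2.T k0 σD) D) :
    (M1.moranSet ∩ Icc A B = ⋂ n, ⋂ (_ : k0 ≤ n), M1.G A B n) ∧
    (M2.moranSet ∩ Icc C D = ⋂ n, ⋂ (_ : k0 ≤ n), M2.G C D n) ∧
    ((∀ n, k0 ≤ n → ∀ (σ : MoranWord nseq n) (τ : MoranWord nseq n),
        M1.T n σ ⊆ Icc A B → M2.T n τ ⊆ Icc C D →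
        F '' (M1.T n σ ×ˢ M2.T n τ) = F '' (M1.tilde n σ ×ˢ M2.tilde n τ)) →
      F '' ((M1.moranSet ∩ Icc A B) ×ˢ (M2.moranSet ∩ Icc C D)) =
        F '' (M1.G A B k0 ×ˢ M2.G C D k0)) := by
  have hE1 := M1.iInter_G_eq hAB hA hB
  have hE2 := M2.iInter_G_eq hCD hC hD
  refine ⟨hE1.symm, hE2.symm, fun H => ?_⟩
  refine (image_mono (prod_mono ?_ ?_)).antisymm
    (M1.image_G_prod_G_subset_image_moranSet_prod M2 hF hAB hCD hA hB hC hD H)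
  · exact hE1 ▸ iInter₂_subset k0 le_rfl
  · exact hE2 ▸ iInter₂_subset k0 le_rfl

/-- **Lemma 2.1.**  Let `E1, E2` be Moran sets, `F : ℝ² → ℝ` continuous,
`A` (resp. `B`) the left (resp. right) endpoint of some rank-`k0` basic interval of `E1`
with `A < B`, and `C, D` likewise for `E2`.  With `G_n^{(i)}` the union of the rank-`n`
basic intervals contained in `[A,B]` (resp. `[C,D]`):
(a) `E1 ∩ [A,B] = ⋂_{n ≥ k0} G_n^{(1)}` and `E2 ∩ [C,D] = ⋂_{n ≥ k0} G_n^{(2)}`;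
(b) if `F(I1 × I2) = F(Ĩ1 × Ĩ2)` for all rank-`n` basic intervals `I1 ⊆ G_n^{(1)}`,
`I2 ⊆ G_n^{(2)}` with `n ≥ k0`, then
`F((E1 ∩ [A,B]) × (E2 ∩ [C,D])) = F(G_{k0}^{(1)} × G_{k0}^{(2)})`. -/
theorem moran_intersection_G_and_image
    (nseq : ℕ → ℕ) (cseq : ℕ → ℝ)
    (hn : ∀ k, 2 ≤ nseq k) (hc : ∀ k, 0 < cseq k)
    (hcn : ∀ k, cseq k * (nseq k : ℝ) < 1)
    (M1 M2 : MoranStructure nseq cseq)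
    (F : ℝ × ℝ → ℝ) (hF : Continuous F)
    (k0 : ℕ) (hk0 : 1 ≤ k0)
    (A B C D : ℝ) (hAB : A < B) (hCD : C < D)
    (σA : MoranWord nseq k0) (hA : IsLeast (M1.T k0 σA) A)
    (σB : MoranWord nseq k0) (hB : IsGreatest (M1.T k0 σB) B)
    (σC : MoranWord nseq k0) (hC : IsLeast (M2.T k0 σC) C)
    (σD : MoranWord nseq k0) (hD : IsGreatest (M2.T k0 σD) D) :
    (M1.moranSet ∩ Icc A B = ⋂ n, ⋂ (_ : k0 ≤ n), M1.G A B n) ∧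
    (M2.moranSet ∩ Icc C D = ⋂ n, ⋂ (_ : k0 ≤ n), M2.G C D n) ∧
    ((∀ n, k0 ≤ n → ∀ (σ : MoranWord nseq n) (τ : MoranWord nseq n),
        M1.T n σ ⊆ Icc A B → M2.T n τ ⊆ Icc C D →
        F '' (M1.T n σ ×ˢ M2.T n τ) = F '' (M1.tilde n σ ×ˢ M2.tilde n τ)) →
      F '' ((M1.moranSet ∩ Icc A B) ×ˢ (M2.moranSet ∩ Icc C D)) =
        F '' (M1.G A B k0 ×ˢ M2.G C D k0)) :=
  moran_intersection_G_and_image_general nseq cseq M1 M2 F hF k0 A B C D hAB hCD σA hA σB hB σC hC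
    σD hD
end

section
/- Let E1, E2 ∈ (M, c_k, n_k) be Moran sets, let U ⊆ ℝ² be open and let f : U → ℝ be continuously differentiable. Fix k ≥ 1, let I = [a, a+t] be a rank-(k−1) basic interval of E1 and J = [b, b+t] a rank-(k−1) basic interval of E2 (so t = c_1 ⋯ c_{k−1}, with t = 1 when k = 1), and assume I × J ⊆ U. Suppose that on all of I × J the partial derivatives ∂_x f and ∂_y f are nonvanishing with constant signs, and that for every (x, y) ∈ I × J, sup_{j≥1} (1 − c_j n_j) < |∂_y f(x, y) / ∂_x f(x, y)| < inf_{j≥1} ( c_j / (1 − n_j c_j) ). Then f(I × J) = f(Ĩ × J̃), where Ĩ = ⋃_{i=1}^{n_k} I_i and J̃ = ⋃_{j=1}^{n_k} J_j are the unions of the rank-k children of I and J respectively. -/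
/-!
The children of `I` and `J` are intervals of length `s = c t` whose gaps have length at most
`G = t - n s`, because the `n` children have disjoint interiors. The ratio condition says that
crossing a gap of `J` changes `f` less than a step of length `s` in `x`, and crossing a gap of `I`
changes it less than a step of length `t` in `y`. By the mean value theorem the images of
neighbouring pieces therefore overlap, so first each `f (I_i × J̃)` and then `f (Ĩ × J̃)` is an
interval. As the partial derivatives have constant signs, `f` attains its extreme values on
`I × J` at the corners, which lie in `Ĩ × J̃`.
-/

open Set

open MeasureTheory Function

theorem mem_uIcc_of_sub_mul_sub_nonneg {p q r : ℝ} (h : 0 ≤ (q - p) * (r - q)) :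
    q ∈ uIcc p r := by
  rcases le_total p q with hpq | hqp
  · rcases eq_or_lt_of_le hpq with rfl | hpq
    · exact left_mem_uIcc
    · exact mem_uIcc.2
        (Or.inl ⟨hpq.le, le_of_sub_nonneg (nonneg_of_mul_nonneg_right h (sub_pos.2 hpq))⟩)
  · rcases eq_or_lt_of_le hqp with rfl | hqp
    · exact left_mem_uIcc
    · exact mem_uIcc.2
        (Or.inr ⟨le_of_sub_nonpos (nonpos_of_mul_nonneg_right h (sub_neg.2 hqp)), hqp.le⟩)

theorem add_mul_self_pos_of_abs_lt {x y : ℝ} (h : |y| < |x|) : 0 < (x + y) * x := by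
  have hx : 0 < |x| := (abs_nonneg y).trans_lt h
  nlinarith [abs_mul_abs_self x, neg_abs_le (x * y), abs_mul x y, mul_lt_mul_of_pos_left h hx]

theorem mul_pos_of_forall_pos_or_forall_neg {α : Type*} {K : Set α} {g : α → ℝ}
    (h : (∀ p ∈ K, 0 < g p) ∨ (∀ p ∈ K, g p < 0)) : ∀ p ∈ K, ∀ q ∈ K, 0 < g p * g q := by
  rcases h with h | h <;> intro p hp q hq
  · exact mul_pos (h p hp) (h q hq)
  · exact mul_pos_of_neg_of_neg (h p hp) (h q hq)

theorem ContinuousLinearMap.apply_mk_zero (L : ℝ × ℝ →L[ℝ] ℝ) (x : ℝ) :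
    L (x, 0) = x * L (1, 0) := by
  rw [← smul_eq_mul, ← map_smul]; simp

theorem ContinuousLinearMap.apply_zero_mk (L : ℝ × ℝ →L[ℝ] ℝ) (y : ℝ) :
    L (0, y) = y * L (0, 1) := by
  rw [← smul_eq_mul, ← map_smul]; simp

theorem IsPreconnected.lt_of_lt_of_notMem {S : Set ℝ} (hS : IsPreconnected S) {v p q : ℝ}
    (hv : v ∉ S) (hp : p ∈ S) (hq : q ∈ S) (hpv : p < v) : q < v := by
  by_contra! hvq
  exact hv (hS.Icc_subset hp hq ⟨hpv.le, hvq⟩)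

theorem IsCompact.mem_and_mem_of_convexHull_eq_Icc {S : Set ℝ} {p q : ℝ} (hS : IsCompact S)
    (hpq : p ≤ q) (hhull : convexHull ℝ S = Icc p q) : p ∈ S ∧ q ∈ S := by
  have hne : S.Nonempty := by
    rw [← convexHull_nonempty_iff (𝕜 := ℝ), hhull]; exact nonempty_Icc.2 hpq
  have hsub : S ⊆ Icc p q := hhull ▸ subset_convexHull ℝ S
  have hIcc : Icc p q ⊆ Icc (sInf S) (sSup S) := hhull ▸
    convexHull_min (fun x hx => ⟨csInf_le hS.bddBelow hx, le_csSup hS.bddAbove hx⟩)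
      (convex_Icc _ _)
  have hinf := hS.sInf_mem hne
  have hsup := hS.sSup_mem hne
  exact ⟨le_antisymm (hIcc (left_mem_Icc.2 hpq)).1 (hsub hinf).1 ▸ hinf,
    le_antisymm (hsub hsup).2 (hIcc (right_mem_Icc.2 hpq)).2 ▸ hsup⟩

theorem card_mul_add_sub_le {ι : Type*} [Fintype ι] {x : ι → ℝ} {s u w a b : ℝ}
    (hs : 0 ≤ s) (huw : u ≤ w) (hab : a ≤ b)
    (hdisj : Pairwise (Disjoint on fun i => Ioo (x i) (x i + s)))
    (hgap : ∀ i, Disjoint (Ioo (x i) (x i + s)) (Ioo u w))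
    (hsub : ∀ i, Ioo (x i) (x i + s) ⊆ Icc a b) (huwsub : Ioo u w ⊆ Icc a b) :
    Fintype.card ι * s + (w - u) ≤ b - a := by
  have hfin : volume (⋃ i, Ioo (x i) (x i + s)) ≠ ⊤ :=
    ((measure_mono (iUnion_subset hsub)).trans_lt measure_Icc_lt_top).ne
  calc Fintype.card ι * s + (w - u)
      = volume.real ((⋃ i, Ioo (x i) (x i + s)) ∪ Ioo u w) := by
        rw [measureReal_union (disjoint_iUnion_left.2 hgap) measurableSet_Ioo hfin
            measure_Ioo_lt_top.ne,
          measureReal_iUnion_fintype hdisj (fun _ => measurableSet_Ioo)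
            (fun _ => measure_Ioo_lt_top.ne)]
        simp [hs, huw]
    _ ≤ volume.real (Icc a b) :=
        measureReal_mono (union_subset (iUnion_subset hsub) huwsub) measure_Icc_lt_top.ne
    _ = b - a := Real.volume_real_Icc_of_le hab

theorem IsCompact.exists_gap_of_lt_of_lt {S : Set ℝ} {φ : ℝ → ℝ} {v y₁ y₂ : ℝ}
    (hS : IsCompact S) (hφ : ContinuousOn φ S) (hv : ∀ y ∈ S, φ y ≠ v)
    (hy₁ : y₁ ∈ S) (hy₂ : y₂ ∈ S) (h₁ : φ y₁ < v) (h₂ : v < φ y₂) :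
    ∃ u ∈ S, ∃ w ∈ S, u < w ∧ Disjoint (Ioo u w) S ∧ (φ u - v) * (φ w - v) < 0 := by
  wlog hlt : y₁ < y₂ generalizing φ v y₁ y₂
  · have hgt : y₂ < y₁ := lt_of_le_of_ne (not_lt.1 hlt) (by rintro rfl; linarith)
    obtain ⟨u, hu, w, hw, huw, hgap, hneg⟩ := this (φ := fun y => -φ y) (v := -v) hφ.neg
      (fun y hy h => hv y hy (neg_inj.1 h)) hy₂ hy₁ (neg_lt_neg h₂) (neg_lt_neg h₁) hgt
    exact ⟨u, hu, w, hw, huw, hgap, by linarith⟩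
  have hcpt : ∀ p q : ℝ, ∀ C : Set ℝ, IsClosed C → IsCompact (S ∩ Icc p q ∩ φ ⁻¹' C) :=
    fun p q C hC => (hS.inter_right isClosed_Icc).of_isClosed_subset
      ((hφ.mono inter_subset_left).preimage_isClosed_of_isClosed
        (hS.inter_right isClosed_Icc).isClosed hC) inter_subset_left
  -- `w` is the first point of `S` after `y₁` above `v`, and `u` the last point before `w` below `v`
  obtain ⟨w, ⟨⟨hwS, hw₁, hw₂⟩, hvw⟩, hwleast⟩ :=
    (hcpt y₁ y₂ _ isClosed_Ici).exists_isLeast ⟨y₂, ⟨hy₂, hlt.le, le_rfl⟩, h₂.le⟩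
  obtain ⟨u, ⟨⟨huS, hu₁, hu₂⟩, huv⟩, hugreatest⟩ :=
    (hcpt y₁ w _ isClosed_Iic).exists_isGreatest ⟨y₁, ⟨hy₁, le_rfl, hw₁⟩, h₁.le⟩
  have huv' : φ u < v := lt_of_le_of_ne huv (hv u huS)
  have hvw' : v < φ w := lt_of_le_of_ne hvw (hv w hwS).symm
  refine ⟨u, huS, w, hwS, lt_of_le_of_ne hu₂ (by rintro rfl; linarith), ?_,
    mul_neg_of_neg_of_pos (by linarith) (by linarith)⟩
  refine disjoint_left.2 fun z ⟨huz, hzw⟩ hzS => ?_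
  rcases le_or_gt (φ z) v with hz | hz
  · exact (hugreatest ⟨⟨hzS, hu₁.trans huz.le, hzw.le⟩, hz⟩).not_gt huz
  · exact (hwleast ⟨⟨hzS, hu₁.trans huz.le, hzw.le.trans hw₂⟩, hz.le⟩).not_gt hzw

theorem isPreconnected_image_prod_of_gaps {f : ℝ × ℝ → ℝ} {A B : Set ℝ} {y₀ y₁ : ℝ}
    (hA : IsCompact A) (hy₀ : y₀ ∈ B) (hy₁ : y₁ ∈ B) (hf : ContinuousOn f (A ×ˢ B))
    (hpiece : ∀ x ∈ A, ∃ Q ⊆ A, x ∈ Q ∧ IsPreconnected (f '' (Q ×ˢ B)))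
    (hcross : ∀ u ∈ A, ∀ w ∈ A, u < w → Disjoint (Ioo u w) A →
      (f (w, y₁) - f (u, y₀)) * (f (w, y₀) - f (u, y₁)) < 0) :
    IsPreconnected (f '' (A ×ˢ B)) := by
  rw [isPreconnected_iff_ordConnected]
  refine ⟨?_⟩
  rintro _ ⟨P, hP, rfl⟩ _ ⟨R, hR, rfl⟩ v ⟨hPv, hvR⟩
  by_contra hv
  have hne : ∀ x ∈ A, ∀ y ∈ B, f (x, y) ≠ v := fun x hx y hy h =>
    hv ⟨(x, y), ⟨hx, hy⟩, h⟩
  -- the image of the piece through `x` is an interval avoiding `v`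
  have hside : ∀ x ∈ A, ∀ y ∈ B, ∀ y' ∈ B, f (x, y) < v → f (x, y') < v := by
    intro x hx y hy y' hy' hlt
    obtain ⟨Q, hQA, hxQ, hQ⟩ := hpiece x hx
    exact hQ.lt_of_lt_of_notMem (fun ⟨p, hp, hpv⟩ => hne p.1 (hQA hp.1) p.2 hp.2 hpv)
      ⟨(x, y), ⟨hxQ, hy⟩, rfl⟩ ⟨(x, y'), ⟨hxQ, hy'⟩, rfl⟩ hlt
  have hside' : ∀ x ∈ A, ∀ y ∈ B, ∀ y' ∈ B, v < f (x, y) → v < f (x, y') :=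
    fun x hx y hy y' hy' hlt => lt_of_le_of_ne
      (not_lt.1 fun h => hlt.not_gt (hside x hx y' hy' y hy h)) (hne x hx y' hy').symm
  have hP₀ : f (P.1, y₀) < v :=
    hside P.1 hP.1 P.2 hP.2 y₀ hy₀ (lt_of_le_of_ne hPv (hne P.1 hP.1 P.2 hP.2))
  have hR₀ : v < f (R.1, y₀) :=
    hside' R.1 hR.1 R.2 hR.2 y₀ hy₀ (lt_of_le_of_ne hvR (hne R.1 hR.1 R.2 hR.2).symm)
  obtain ⟨u, hu, w, hw, huw, hgap, hneg⟩ := hA.exists_gap_of_lt_of_lt (φ := fun x => f (x, y₀))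
    (hf.comp (continuous_id.prodMk continuous_const).continuousOn fun x hx => ⟨hx, hy₀⟩)
    (fun x hx => hne x hx y₀ hy₀) hP.1 hR.1 hP₀ hR₀
  have hcr := hcross u hu w hw huw hgap
  rcases lt_or_gt_of_ne (hne u hu y₀ hy₀) with hu₀ | hu₀
  · have hw₀ : v < f (w, y₀) := by nlinarith
    have := hside u hu y₀ hy₀ y₁ hy₁ hu₀
    have := hside' w hw y₀ hy₀ y₁ hy₁ hw₀
    nlinarith
  · have hw₀ : f (w, y₀) < v := by nlinarith
    have := hside' u hu y₀ hy₀ y₁ hy₁ hu₀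
    have := hside w hw y₀ hy₀ y₁ hy₁ hw₀
    nlinarith

section MeanValue

variable {E : Type*} [NormedAddCommGroup E] [NormedSpace ℝ E] {f : E → ℝ} {K : Set E}

theorem Convex.exists_mem_sub_eq_fderiv (hK : Convex ℝ K)
    (hf : ∀ p ∈ K, DifferentiableAt ℝ f p) {P R : E} (hP : P ∈ K) (hR : R ∈ K) :
    ∃ ξ ∈ K, f R - f P = fderiv ℝ f ξ (R - P) := by
  obtain ⟨ξ, hξ, h⟩ := domain_mvt (fun p hp => (hf p hp).hasFDerivAt.hasFDerivWithinAt) hK hP hR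
  exact ⟨ξ, hK.segment_subset hP hR hξ, h⟩

theorem Convex.mem_uIcc_of_mem_segment (hK : Convex ℝ K)
    (hf : ∀ p ∈ K, DifferentiableAt ℝ f p) {P R Q : E}
    (hsign : ∀ p ∈ K, ∀ q ∈ K, 0 < fderiv ℝ f p (R - P) * fderiv ℝ f q (R - P))
    (hP : P ∈ K) (hR : R ∈ K) (hQ : Q ∈ segment ℝ P R) : f Q ∈ uIcc (f P) (f R) := by
  rw [segment_eq_image'] at hQ
  obtain ⟨θ, hθ, rfl⟩ := hQ
  have hQK := hK.add_smul_sub_mem hP hR hθ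
  obtain ⟨ξ, hξ, hξeq⟩ := hK.exists_mem_sub_eq_fderiv hf hP hQK
  obtain ⟨η, hη, hηeq⟩ := hK.exists_mem_sub_eq_fderiv hf hQK hR
  have hRQ : R - (P + θ • (R - P)) = (1 - θ) • (R - P) := by module
  refine mem_uIcc_of_sub_mul_sub_nonneg ?_
  rw [hξeq, hηeq, add_sub_cancel_left, hRQ, map_smul, map_smul, smul_eq_mul, smul_eq_mul]
  have := hsign ξ hξ η hη
  have : 0 ≤ θ * (1 - θ) := mul_nonneg hθ.1 (by linarith [hθ.2])
  nlinarith

/-- The two diagonals of the parallelogram spanned by `e` and `e'` are crossed by `f` in opposite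
directions. -/
theorem Convex.sub_mul_sub_neg (hK : Convex ℝ K)
    (hf : ∀ p ∈ K, DifferentiableAt ℝ f p) {P e e' : E}
    (hsign : ∀ p ∈ K, ∀ q ∈ K, 0 < fderiv ℝ f p e * fderiv ℝ f q e)
    (hdom : ∀ p ∈ K, |fderiv ℝ f p e'| < |fderiv ℝ f p e|)
    (h₀ : P ∈ K) (h₁ : P + e ∈ K) (h₂ : P + e' ∈ K) (h₃ : P + e + e' ∈ K) :
    (f (P + e + e') - f P) * (f (P + e') - f (P + e)) < 0 := by
  obtain ⟨ξ, hξ, hξeq⟩ := hK.exists_mem_sub_eq_fderiv hf h₀ h₃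
  obtain ⟨η, hη, hηeq⟩ := hK.exists_mem_sub_eq_fderiv hf h₁ h₂
  rw [hξeq, hηeq, add_assoc, add_sub_cancel_left, add_sub_add_left_eq_sub, map_add, map_sub]
  have hξpos := add_mul_self_pos_of_abs_lt (hdom ξ hξ)
  have hηpos := add_mul_self_pos_of_abs_lt ((abs_neg (fderiv ℝ f η e')).trans_lt (hdom η hη))
  have := hsign ξ hξ η hη
  nlinarith [mul_pos hξpos hηpos]

end MeanValue

/-- The properties of `Ĩ ⊆ I = [a, a + t]` used in the proof, with children of length `s`. -/
structure IsChildUnion (A : Set ℝ) (a t s G : ℝ) : Prop where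
  isCompact : IsCompact A
  subset_Icc : A ⊆ Icc a (a + t)
  left_mem : a ∈ A
  right_mem : a + t ∈ A
  exists_Icc : ∀ x ∈ A, ∃ y, x ∈ Icc y (y + s) ∧ Icc y (y + s) ⊆ A
  gap_le : ∀ u ∈ A, ∀ w ∈ A, u < w → Disjoint (Ioo u w) A → w - u ≤ G

/-- The hypotheses on `f`, with the bounds on `|∂_y f / ∂_x f|` multiplied out using `s = c t`
and `G = t - n s`. -/
structure SlopeCondition (f : ℝ × ℝ → ℝ) (K : Set (ℝ × ℝ)) (t s G : ℝ) : Prop where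
  differentiableAt : ∀ p ∈ K, DifferentiableAt ℝ f p
  sign_fst : ∀ p ∈ K, ∀ q ∈ K, 0 < fderiv ℝ f p (1, 0) * fderiv ℝ f q (1, 0)
  sign_snd : ∀ p ∈ K, ∀ q ∈ K, 0 < fderiv ℝ f p (0, 1) * fderiv ℝ f q (0, 1)
  gap_fst : ∀ p ∈ K, G * |fderiv ℝ f p (1, 0)| < t * |fderiv ℝ f p (0, 1)|
  gap_snd : ∀ p ∈ K, G * |fderiv ℝ f p (0, 1)| < s * |fderiv ℝ f p (1, 0)|

namespace SlopeCondition

variable {f : ℝ × ℝ → ℝ} {a b t s G : ℝ} {A B : Set ℝ}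

theorem continuousOn {K : Set (ℝ × ℝ)} (hC : SlopeCondition f K t s G) : ContinuousOn f K :=
  fun p hp => (hC.differentiableAt p hp).continuousAt.continuousWithinAt

theorem sign_mk_zero {K : Set (ℝ × ℝ)} (hC : SlopeCondition f K t s G) {c : ℝ} (hc : c ≠ 0) :
    ∀ p ∈ K, ∀ q ∈ K, 0 < fderiv ℝ f p (c, 0) * fderiv ℝ f q (c, 0) := by
  intro p hp q hq
  rw [(fderiv ℝ f p).apply_mk_zero c, (fderiv ℝ f q).apply_mk_zero c, mul_mul_mul_comm]
  exact mul_pos (mul_self_pos.2 hc) (hC.sign_fst p hp q hq)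

theorem sign_zero_mk {K : Set (ℝ × ℝ)} (hC : SlopeCondition f K t s G) {c : ℝ} (hc : c ≠ 0) :
    ∀ p ∈ K, ∀ q ∈ K, 0 < fderiv ℝ f p (0, c) * fderiv ℝ f q (0, c) := by
  intro p hp q hq
  rw [(fderiv ℝ f p).apply_zero_mk c, (fderiv ℝ f q).apply_zero_mk c, mul_mul_mul_comm]
  exact mul_pos (mul_self_pos.2 hc) (hC.sign_snd p hp q hq)

theorem isPreconnected_image_Icc_prod (hC : SlopeCondition f (Icc a (a + t) ×ˢ Icc b (b + t)) t s G)
    (hB : IsChildUnion B b t s G) (hs : 0 < s) {y : ℝ} (hy : Icc y (y + s) ⊆ Icc a (a + t)) :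
    IsPreconnected (f '' (Icc y (y + s) ×ˢ B)) := by
  have hQB : Icc y (y + s) ×ˢ B ⊆ Icc a (a + t) ×ˢ Icc b (b + t) := prod_mono hy hB.subset_Icc
  have hg : ContinuousOn (f ∘ Prod.swap) (B ×ˢ Icc y (y + s)) :=
    (hC.continuousOn.mono hQB).comp continuous_swap.continuousOn fun p hp => ⟨hp.2, hp.1⟩
  have hys : y ≤ y + s := by linarith
  have key := isPreconnected_image_prod_of_gaps hB.isCompact (left_mem_Icc.2 hys)
    (right_mem_Icc.2 hys) hg
    (fun x hx => ⟨{x}, singleton_subset_iff.2 hx, rfl,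
      (isPreconnected_singleton.prod isPreconnected_Icc).image _
        (hg.mono (prod_mono (singleton_subset_iff.2 hx) subset_rfl))⟩)
    (fun u hu w hw huw hgap => by
      have hdom : ∀ p ∈ Icc a (a + t) ×ˢ Icc b (b + t),
          |fderiv ℝ f p (0, w - u)| < |fderiv ℝ f p (s, 0)| := by
        intro p hp
        rw [(fderiv ℝ f p).apply_zero_mk, (fderiv ℝ f p).apply_mk_zero, abs_mul,
          abs_mul, abs_of_pos (sub_pos.2 huw), abs_of_pos hs]
        exact (mul_le_mul_of_nonneg_right (hB.gap_le u hu w hw huw hgap)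
          (abs_nonneg _)).trans_lt (hC.gap_snd p hp)
      have h := ((convex_Icc _ _).prod (convex_Icc _ _)).sub_mul_sub_neg hC.differentiableAt
        (P := (y, u)) (hC.sign_mk_zero hs.ne') hdom (hQB (mk_mem_prod (left_mem_Icc.2 hys) hu))
        (by simpa using hQB (mk_mem_prod (right_mem_Icc.2 hys) hu))
        (by simpa using hQB (mk_mem_prod (left_mem_Icc.2 hys) hw))
        (by simpa using hQB (mk_mem_prod (right_mem_Icc.2 hys) hw))
      simpa using h)
  rwa [image_comp, image_swap_prod] at key

theorem isPreconnected_image_prod (hC : SlopeCondition f (Icc a (a + t) ×ˢ Icc b (b + t)) t s G)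
    (hA : IsChildUnion A a t s G) (hB : IsChildUnion B b t s G) (hs : 0 < s) (ht : 0 < t) :
    IsPreconnected (f '' (A ×ˢ B)) := by
  have hAB : A ×ˢ B ⊆ Icc a (a + t) ×ˢ Icc b (b + t) := prod_mono hA.subset_Icc hB.subset_Icc
  refine isPreconnected_image_prod_of_gaps hA.isCompact hB.left_mem hB.right_mem
    (hC.continuousOn.mono hAB) (fun x hx => ?_) (fun u hu w hw huw hgap => ?_)
  · obtain ⟨y, hxy, hyA⟩ := hA.exists_Icc x hx
    exact ⟨_, hyA, hxy, hC.isPreconnected_image_Icc_prod hB hs (hyA.trans hA.subset_Icc)⟩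
  · have hdom : ∀ p ∈ Icc a (a + t) ×ˢ Icc b (b + t),
        |fderiv ℝ f p (w - u, 0)| < |fderiv ℝ f p (0, t)| := by
      intro p hp
      rw [(fderiv ℝ f p).apply_zero_mk, (fderiv ℝ f p).apply_mk_zero, abs_mul,
        abs_mul, abs_of_pos (sub_pos.2 huw), abs_of_pos ht]
      exact (mul_le_mul_of_nonneg_right (hA.gap_le u hu w hw huw hgap)
        (abs_nonneg _)).trans_lt (hC.gap_fst p hp)
    have h := ((convex_Icc _ _).prod (convex_Icc _ _)).sub_mul_sub_neg hC.differentiableAt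
      (P := (u, b)) (hC.sign_zero_mk ht.ne') hdom (hAB (mk_mem_prod hu hB.left_mem))
      (by simpa using hAB (mk_mem_prod hu hB.right_mem))
      (by simpa using hAB (mk_mem_prod hw hB.left_mem))
      (by simpa using hAB (mk_mem_prod hw hB.right_mem))
    simpa using h

theorem mem_uIcc_snd (hC : SlopeCondition f (Icc a (a + t) ×ˢ Icc b (b + t)) t s G) (ht : 0 < t)
    {x y : ℝ} (hx : x ∈ Icc a (a + t)) (hy : y ∈ Icc b (b + t)) :
    f (x, y) ∈ uIcc (f (x, b)) (f (x, b + t)) := by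
  have hdir : ((x, b + t) : ℝ × ℝ) - (x, b) = (0, t) := by ext <;> simp
  refine ((convex_Icc _ _).prod (convex_Icc _ _)).mem_uIcc_of_mem_segment hC.differentiableAt
    (hdir ▸ hC.sign_zero_mk ht.ne') (mk_mem_prod hx (left_mem_Icc.2 (by linarith)))
    (mk_mem_prod hx (right_mem_Icc.2 (by linarith))) ?_
  rw [← Prod.image_mk_segment_right, segment_eq_Icc (by linarith)]
  exact ⟨y, hy, rfl⟩

theorem mem_uIcc_fst (hC : SlopeCondition f (Icc a (a + t) ×ˢ Icc b (b + t)) t s G) (ht : 0 < t)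
    {x y : ℝ} (hx : x ∈ Icc a (a + t)) (hy : y ∈ Icc b (b + t)) :
    f (x, y) ∈ uIcc (f (a, y)) (f (a + t, y)) := by
  have hdir : ((a + t, y) : ℝ × ℝ) - (a, y) = (t, 0) := by ext <;> simp
  refine ((convex_Icc _ _).prod (convex_Icc _ _)).mem_uIcc_of_mem_segment hC.differentiableAt
    (hdir ▸ hC.sign_mk_zero ht.ne') (mk_mem_prod (left_mem_Icc.2 (by linarith)) hy)
    (mk_mem_prod (right_mem_Icc.2 (by linarith)) hy) ?_
  rw [← Prod.image_mk_segment_left, segment_eq_Icc (by linarith)]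
  exact ⟨x, hx, rfl⟩

theorem image_subset_image_prod (hC : SlopeCondition f (Icc a (a + t) ×ˢ Icc b (b + t)) t s G)
    (hA : IsChildUnion A a t s G) (hB : IsChildUnion B b t s G) (hs : 0 < s) (ht : 0 < t) :
    f '' (Icc a (a + t) ×ˢ Icc b (b + t)) ⊆ f '' (A ×ˢ B) := by
  have hV := isPreconnected_iff_ordConnected.1 (hC.isPreconnected_image_prod hA hB hs ht)
  have hedge : ∀ x ∈ A, ∀ y ∈ Icc b (b + t), f (x, y) ∈ f '' (A ×ˢ B) := fun x hx y hy =>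
    hV.uIcc_subset (mem_image_of_mem f (mk_mem_prod hx hB.left_mem))
      (mem_image_of_mem f (mk_mem_prod hx hB.right_mem))
      (hC.mem_uIcc_snd ht (hA.subset_Icc hx) hy)
  rintro _ ⟨⟨x, y⟩, ⟨hx, hy⟩, rfl⟩
  exact hV.uIcc_subset (hedge a hA.left_mem y hy) (hedge (a + t) hA.right_mem y hy)
    (hC.mem_uIcc_fst ht hx hy)

end SlopeCondition

theorem SlopeCondition.of_abs_div_bounds {f : ℝ × ℝ → ℝ} {K : Set (ℝ × ℝ)} {c n t : ℝ}
    (ht : 0 < t) (hnc : n * c < 1) (hf : ∀ p ∈ K, DifferentiableAt ℝ f p)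
    (hsignx : (∀ p ∈ K, 0 < fderiv ℝ f p (1, 0)) ∨ (∀ p ∈ K, fderiv ℝ f p (1, 0) < 0))
    (hsigny : (∀ p ∈ K, 0 < fderiv ℝ f p (0, 1)) ∨ (∀ p ∈ K, fderiv ℝ f p (0, 1) < 0))
    (hbound : ∀ p ∈ K, 1 - c * n < |fderiv ℝ f p (0, 1) / fderiv ℝ f p (1, 0)| ∧
      |fderiv ℝ f p (0, 1) / fderiv ℝ f p (1, 0)| < c / (1 - n * c)) :
    SlopeCondition f K t (c * t) (t - n * (c * t)) := by
  have hsx := mul_pos_of_forall_pos_or_forall_neg hsignx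
  refine ⟨hf, hsx, mul_pos_of_forall_pos_or_forall_neg hsigny, fun p hp => ?_, fun p hp => ?_⟩
  all_goals
    have hX : 0 < |fderiv ℝ f p (1, 0)| :=
      abs_pos.2 fun h => by simpa [h] using hsx p hp p hp
    obtain ⟨hlow, hhigh⟩ := hbound p hp
  · rw [abs_div, lt_div_iff₀ hX] at hlow
    nlinarith [mul_lt_mul_of_pos_left hlow ht]
  · rw [abs_div, div_lt_div_iff₀ hX (by linarith)] at hhigh
    nlinarith [mul_lt_mul_of_pos_left hhigh ht]

namespace MoranStructure

variable {nseq : ℕ → ℕ} {cseq : ℕ → ℝ} (M : MoranStructure nseq cseq)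

theorem tilde_subset (k : ℕ) (σ : MoranWord nseq k) : M.tilde k σ ⊆ M.T k σ :=
  iUnion_subset (M.child_subset k σ)

theorem exists_T_succ_eq_Icc {m : ℕ} {σ : MoranWord nseq m} {a t : ℝ}
    (hI : M.T m σ = Icc a (a + t)) (ht : 0 ≤ t) (i : Fin (nseq m)) :
    ∃ x, M.T (m + 1) (Fin.snoc σ i) = Icc x (x + cseq m * t) := by
  obtain ⟨u, w, huw, hT⟩ := M.isClosedInterval (m + 1) (Fin.snoc σ i)
  have hd := M.ratio m σ i
  rw [hT, hI, Real.diam_Icc huw.le, Real.diam_Icc (by linarith)] at hd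
  exact ⟨u, by rw [hT]; congr 1; linarith⟩

theorem isChildUnion_tilde {m : ℕ} {σ : MoranWord nseq m} {a t : ℝ}
    (hI : M.T m σ = Icc a (a + t)) (ht : 0 ≤ t) (hc : 0 ≤ cseq m) :
    IsChildUnion (M.tilde m σ) a t (cseq m * t) (t - nseq m * (cseq m * t)) := by
  choose x hx using M.exists_T_succ_eq_Icc hI ht
  have htilde : M.tilde m σ = ⋃ i, Icc (x i) (x i + cseq m * t) := iUnion_congr hx
  have hsub : M.tilde m σ ⊆ Icc a (a + t) := hI ▸ M.tilde_subset m σ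
  have hchild : ∀ i, Icc (x i) (x i + cseq m * t) ⊆ M.tilde m σ :=
    fun i => htilde ▸ subset_iUnion (fun i => Icc (x i) (x i + cseq m * t)) i
  have hcpt : IsCompact (M.tilde m σ) := htilde ▸ isCompact_iUnion fun i => isCompact_Icc
  obtain ⟨hleft, hright⟩ :=
    hcpt.mem_and_mem_of_convexHull_eq_Icc (by linarith) (hI ▸ M.hull m σ)
  refine ⟨hcpt, hsub, hleft, hright, fun y hy => ?_, fun u hu w hw huw hgap => ?_⟩
  · rw [htilde, mem_iUnion] at hy
    obtain ⟨i, hi⟩ := hy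
    exact ⟨x i, hi, hchild i⟩
  · have hdisj : Pairwise (Disjoint on fun i => Ioo (x i) (x i + cseq m * t)) := by
      intro i j hij
      have h := M.disjoint_interiors m σ i j hij
      rw [hx, hx, interior_Icc, interior_Icc] at h
      exact disjoint_iff_inter_eq_empty.2 h
    have h := card_mul_add_sub_le (mul_nonneg hc ht) huw.le (by linarith : a ≤ a + t) hdisj
      (fun i => (hgap.mono_right (Ioo_subset_Icc_self.trans (hchild i))).symm)
      (fun i => Ioo_subset_Icc_self.trans ((hchild i).trans hsub))
      (Ioo_subset_Icc_self.trans (Icc_subset_Icc (hsub hu).1 (hsub hw).2))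
    rw [Fintype.card_fin] at h
    linarith

end MoranStructure

theorem moran_image_eq_image_tilde_general
    (nseq : ℕ → ℕ) (cseq : ℕ → ℝ)
    (hc : ∀ k, 0 < cseq k)
    (hcn : ∀ k, cseq k * (nseq k : ℝ) < 1)
    (M1 M2 : MoranStructure nseq cseq)
    (U : Set (ℝ × ℝ)) (hU : IsOpen U)
    (f : ℝ × ℝ → ℝ) (hf : ContDiffOn ℝ 1 f U)
    (m : ℕ) (σ : MoranWord nseq m) (τ : MoranWord nseq m)
    (a b t : ℝ) (ht : t = ∏ j ∈ Finset.range m, cseq j)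
    (hI : M1.T m σ = Icc a (a + t)) (hJ : M2.T m τ = Icc b (b + t))
    (hIJU : Icc a (a + t) ×ˢ Icc b (b + t) ⊆ U)
    (hsignx : (∀ p ∈ Icc a (a + t) ×ˢ Icc b (b + t), 0 < fderiv ℝ f p (1, 0)) ∨
      (∀ p ∈ Icc a (a + t) ×ˢ Icc b (b + t), fderiv ℝ f p (1, 0) < 0))
    (hsigny : (∀ p ∈ Icc a (a + t) ×ˢ Icc b (b + t), 0 < fderiv ℝ f p (0, 1)) ∨
      (∀ p ∈ Icc a (a + t) ×ˢ Icc b (b + t), fderiv ℝ f p (0, 1) < 0))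
    (hbound : ∀ p ∈ Icc a (a + t) ×ˢ Icc b (b + t),
      (⨆ j, (1 - cseq j * (nseq j : ℝ))) <
          |fderiv ℝ f p (0, 1) / fderiv ℝ f p (1, 0)| ∧
        |fderiv ℝ f p (0, 1) / fderiv ℝ f p (1, 0)| <
          ⨅ j, cseq j / (1 - (nseq j : ℝ) * cseq j)) :
    f '' (M1.T m σ ×ˢ M2.T m τ) = f '' (M1.tilde m σ ×ˢ M2.tilde m τ) := by
  have ht₀ : 0 < t := ht ▸ Finset.prod_pos fun j _ => hc j
  have hsup : BddAbove (range fun j => 1 - cseq j * (nseq j : ℝ)) :=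
    ⟨1, by rintro _ ⟨j, rfl⟩; nlinarith [hc j, (nseq j).cast_nonneg (α := ℝ)]⟩
  have hinf : BddBelow (range fun j => cseq j / (1 - (nseq j : ℝ) * cseq j)) :=
    ⟨0, by rintro _ ⟨j, rfl⟩; exact div_nonneg (hc j).le (by linarith [hcn j])⟩
  have hC := SlopeCondition.of_abs_div_bounds ht₀ (by linarith [hcn m])
    (fun p hp => (hf.differentiableOn one_ne_zero p (hIJU hp)).differentiableAt
      (hU.mem_nhds (hIJU hp))) hsignx hsigny
    fun p hp => ⟨(le_ciSup hsup m).trans_lt (hbound p hp).1,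
      (hbound p hp).2.trans_le (ciInf_le hinf m)⟩
  refine (image_mono (prod_mono (M1.tilde_subset m σ) (M2.tilde_subset m τ))).antisymm' ?_
  rw [hI, hJ]
  exact hC.image_subset_image_prod (M1.isChildUnion_tilde hI ht₀.le (hc m).le)
    (M2.isChildUnion_tilde hJ ht₀.le (hc m).le) (mul_pos (hc m) ht₀) ht₀

/-- **Lemma 2.2.**  Let `I = [a, a+t]` and `J = [b, b+t]` be rank-`m`
basic intervals of the Moran sets `E1` and `E2` (so `t = c_1 ⋯ c_m`; in the paper's
indexing `m = k - 1` with `k ≥ 1`), with `I × J ⊆ U`, where `f` is continuously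
differentiable on the open set `U`, the partial derivatives `∂ₓf, ∂_yf` are
nonvanishing with constant signs on `I × J`, and for every `(x, y) ∈ I × J`
`sup_j (1 - c_j n_j) < |∂_y f(x,y) / ∂_x f(x,y)| < inf_j (c_j / (1 - n_j c_j))`.
Then `f(I × J) = f(Ĩ × J̃)`. -/
theorem moran_image_eq_image_tilde
    (nseq : ℕ → ℕ) (cseq : ℕ → ℝ)
    (hn : ∀ k, 2 ≤ nseq k) (hc : ∀ k, 0 < cseq k)
    (hcn : ∀ k, cseq k * (nseq k : ℝ) < 1)
    (M1 M2 : MoranStructure nseq cseq)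
    (U : Set (ℝ × ℝ)) (hU : IsOpen U)
    (f : ℝ × ℝ → ℝ) (hf : ContDiffOn ℝ 1 f U)
    (m : ℕ) (σ : MoranWord nseq m) (τ : MoranWord nseq m)
    (a b t : ℝ) (ht : t = ∏ j ∈ Finset.range m, cseq j)
    (hI : M1.T m σ = Icc a (a + t)) (hJ : M2.T m τ = Icc b (b + t))
    (hIJU : Icc a (a + t) ×ˢ Icc b (b + t) ⊆ U)
    (hsignx : (∀ p ∈ Icc a (a + t) ×ˢ Icc b (b + t), 0 < fderiv ℝ f p (1, 0)) ∨
      (∀ p ∈ Icc a (a + t) ×ˢ Icc b (b + t), fderiv ℝ f p (1, 0) < 0))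
    (hsigny : (∀ p ∈ Icc a (a + t) ×ˢ Icc b (b + t), 0 < fderiv ℝ f p (0, 1)) ∨
      (∀ p ∈ Icc a (a + t) ×ˢ Icc b (b + t), fderiv ℝ f p (0, 1) < 0))
    (hbound : ∀ p ∈ Icc a (a + t) ×ˢ Icc b (b + t),
      (⨆ j, (1 - cseq j * (nseq j : ℝ))) <
          |fderiv ℝ f p (0, 1) / fderiv ℝ f p (1, 0)| ∧
        |fderiv ℝ f p (0, 1) / fderiv ℝ f p (1, 0)| <
          ⨅ j, cseq j / (1 - (nseq j : ℝ) * cseq j)) :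
    f '' (M1.T m σ ×ˢ M2.T m τ) = f '' (M1.tilde m σ ×ˢ M2.tilde m τ) :=
  moran_image_eq_image_tilde_general nseq cseq hc hcn M1 M2 U hU f hf m σ τ a b t ht hI hJ hIJU
    hsignx hsigny hbound
end
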